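/- arXiv:2112.13667 — 4 statements merged into one kernel-verified Lean document; each statement's English description precedes it below -/
import Mathlib

section
/- Let A, B, X be n×n complex matrices such that the block matrix [[A, X], [X*, B]] is PPT. Then the block matrix [[(A+B)/2, X], [X*, (A+B)/2]] is PPT. -/
open Matrix ComplexOrder
open scoped Classical

/-!
The partial transpose of `[[A, X], [X*, B]]`, with its diagonal blocks swapped by conjugating with
the permutation `Sum.swap`, is `[[B, X], [X*, A]]`. Adding it to `[[A, X], [X*, B]]` and halving
gives `[[(A+B)/2, X], [X*, (A+B)/2]]`, a convex combination of positive semidefinite matrices; the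
same argument with the roles of the two matrices exchanged handles the partial transpose.
-/

namespace Matrix

theorem PosSemidef.fromBlocks_swap {m n R : Type*} [Ring R] [PartialOrder R]
    [StarRing R]
    {A : Matrix m m R} {B : Matrix m n R} {C : Matrix n m R} {D : Matrix n n R}
    (h : (fromBlocks A B C D).PosSemidef) : (fromBlocks D C B A).PosSemidef := by
  simpa only [fromBlocks_submatrix_sum_swap_sum_swap] using h.submatrix Sum.swap

theorem PosSemidef.fromBlocks_half_add {m 𝕜 : Type*} [RCLike 𝕜]
    {A B X Y : Matrix m m 𝕜} (h : (fromBlocks A X Y B).PosSemidef)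
    (hswap : (fromBlocks A Y X B).PosSemidef) :
    (fromBlocks ((2 : 𝕜)⁻¹ • (A + B)) X Y ((2 : 𝕜)⁻¹ • (A + B))).PosSemidef := by
  have hsum := (h.add hswap.fromBlocks_swap).smul (a := (2 : 𝕜)⁻¹) (by positivity)
  rw [fromBlocks_add, fromBlocks_smul] at hsum
  convert hsum using 2 <;> module

end Matrix

theorem stmt4 {n : ℕ} (A B X : Matrix (Fin n) (Fin n) ℂ)
    (hH : (Matrix.fromBlocks A X Xᴴ B).PosSemidef)
    (hτ : (Matrix.fromBlocks A Xᴴ X B).PosSemidef) :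
    (Matrix.fromBlocks ((2 : ℂ)⁻¹ • (A + B)) X Xᴴ ((2 : ℂ)⁻¹ • (A + B))).PosSemidef ∧
      (Matrix.fromBlocks ((2 : ℂ)⁻¹ • (A + B)) Xᴴ X ((2 : ℂ)⁻¹ • (A + B))).PosSemidef :=
  ⟨hH.fromBlocks_half_add hτ, hτ.fromBlocks_half_add hH⟩
end

section
/- Let A, B, X be n×n complex matrices such that the block matrix H = [[A, X], [X*, B]] is PPT. Then H ≤ [[A+B, 0], [0, A+B]] in the Loewner order on 2n×2n Hermitian matrices. -/
open Matrix ComplexOrder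
open scoped Classical

theorem stmt5 {n : ℕ} (A B X : Matrix (Fin n) (Fin n) ℂ)
    (hH : (Matrix.fromBlocks A X Xᴴ B).PosSemidef)
    (hτ : (Matrix.fromBlocks A Xᴴ X B).PosSemidef) :
    (Matrix.fromBlocks (A + B) 0 0 (A + B) -
      Matrix.fromBlocks A X Xᴴ B).PosSemidef := by
  have h := hτ.conjTranspose_mul_mul_same (Matrix.fromBlocks 0 1 (-1) 0 : Matrix (Fin n ⊕ Fin n) (Fin n ⊕ Fin n) ℂ)
  have heq : (Matrix.fromBlocks 0 1 (-1) 0 : Matrix (Fin n ⊕ Fin n) (Fin n ⊕ Fin n) ℂ)ᴴ *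
      Matrix.fromBlocks A Xᴴ X B * Matrix.fromBlocks 0 1 (-1) 0 =
      Matrix.fromBlocks (A + B) 0 0 (A + B) - Matrix.fromBlocks A X Xᴴ B := by
    have h1 : (Matrix.fromBlocks 0 1 (-1) 0 : Matrix (Fin n ⊕ Fin n) (Fin n ⊕ Fin n) ℂ)ᴴ *
        Matrix.fromBlocks A Xᴴ X B * Matrix.fromBlocks 0 1 (-1) 0 =
        Matrix.fromBlocks B (-X) (-Xᴴ) A := by
      simp [Matrix.fromBlocks_conjTranspose, Matrix.fromBlocks_multiply]
    have h2 : Matrix.fromBlocks (A + B) 0 0 (A + B) - Matrix.fromBlocks A X Xᴴ B =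
        (Matrix.fromBlocks B (-X) (-Xᴴ) A : Matrix (Fin n ⊕ Fin n) (Fin n ⊕ Fin n) ℂ) := by
      ext i j
      cases i <;> cases j <;> simp [Matrix.fromBlocks] <;> ring
    rw [h1, h2]
  rw [heq] at h
  exact h
end

section
/- Let A₁, A₂, B₁, B₂ be positive definite n×n complex matrices and X an n×n complex matrix. If the block matrices [[A₁, X], [X*, B₁]] and [[A₂, X], [X*, B₂]] are both positive semidefinite, then the block matrix [[A₁ # A₂, X], [X*, B₁ # B₂]] is positive semidefinite. -/
open Matrix ComplexOrder
open scoped Classical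

/-- The square root of a positive semidefinite matrix, as `Matrix.PosSemidef.sqrt` was defined
in the older Mathlib (removed since). -/
noncomputable def Matrix.PosSemidef.sqrt {m 𝕜 : Type*} [Fintype m] [RCLike 𝕜] [DecidableEq m]
    {A : Matrix m m 𝕜} (hA : A.PosSemidef) : Matrix m m 𝕜 :=
  (hA.1.eigenvectorUnitary : Matrix m m 𝕜) * diagonal ((↑) ∘ (√·) ∘ hA.1.eigenvalues) *
    (star hA.1.eigenvectorUnitary : Matrix m m 𝕜)

theorem Matrix.PosSemidef.posSemidef_sqrt {m 𝕜 : Type*} [Fintype m] [RCLike 𝕜] [DecidableEq m]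
    {A : Matrix m m 𝕜} (hA : A.PosSemidef) : PosSemidef hA.sqrt := by
  apply PosSemidef.mul_mul_conjTranspose_same
  refine posSemidef_diagonal_iff.mpr fun i ↦ ?_
  rw [Function.comp_apply, RCLike.nonneg_iff]
  constructor
  · simp only [RCLike.ofReal_re]; exact Real.sqrt_nonneg _
  · simp only [RCLike.ofReal_im]

/-- The geometric mean `P # Q = P^{1/2} (P^{-1/2} Q P^{-1/2})^{1/2} P^{1/2}` of two
positive definite complex matrices (junk value `0` if `P` or `Q` is not positive definite). -/
noncomputable def geomMean {n : ℕ} (P Q : Matrix (Fin n) (Fin n) ℂ) :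
    Matrix (Fin n) (Fin n) ℂ :=
  if h : P.PosDef ∧ Q.PosDef then
    have hs : ((h.1.posSemidef.sqrt⁻¹) * Q * (h.1.posSemidef.sqrt⁻¹)).PosSemidef := by
      have h1 := h.2.posSemidef.conjTranspose_mul_mul_same (h.1.posSemidef.sqrt⁻¹)
      rwa [Matrix.conjTranspose_nonsing_inv, h.1.posSemidef.posSemidef_sqrt.1.eq] at h1
    h.1.posSemidef.sqrt * hs.sqrt * h.1.posSemidef.sqrt
  else 0

theorem Matrix.PosSemidef.sqrt_mul_self {m 𝕜 : Type*} [Fintype m] [RCLike 𝕜] [DecidableEq m]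
    {A : Matrix m m 𝕜} (hA : A.PosSemidef) : hA.sqrt * hA.sqrt = A := by
  unfold Matrix.PosSemidef.sqrt
  have hU : (star hA.1.eigenvectorUnitary : Matrix m m 𝕜) * (hA.1.eigenvectorUnitary : Matrix m m 𝕜) = 1 :=
    Matrix.mem_unitaryGroup_iff'.mp hA.1.eigenvectorUnitary.2
  have hD : diagonal ((↑) ∘ (√·) ∘ hA.1.eigenvalues) * diagonal ((↑) ∘ (√·) ∘ hA.1.eigenvalues) =
      diagonal (RCLike.ofReal ∘ hA.1.eigenvalues : m → 𝕜) := by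
    rw [diagonal_mul_diagonal]; congr 1; funext i; simp only [Function.comp_apply]
    rw [← RCLike.ofReal_mul, Real.mul_self_sqrt (hA.eigenvalues_nonneg i)]
  have hspec : A = (hA.1.eigenvectorUnitary : Matrix m m 𝕜) *
      diagonal (RCLike.ofReal ∘ hA.1.eigenvalues : m → 𝕜) *
      (star hA.1.eigenvectorUnitary : Matrix m m 𝕜) := hA.1.spectral_theorem
  conv_rhs => rw [hspec]
  simp only [← Matrix.mul_assoc]
  rw [Matrix.mul_assoc _ _ (hA.1.eigenvectorUnitary : Matrix m m 𝕜), hU, Matrix.mul_one,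
    Matrix.mul_assoc _ (diagonal _) (diagonal _), hD]

section helpers
variable {n : ℕ}



lemma posDef_conj {A B : Matrix (Fin n) (Fin n) ℂ} (hA : A.PosDef) (hB : IsUnit B) :
    (Bᴴ * A * B).PosDef := by
  refine Matrix.posDef_iff_dotProduct_mulVec.mpr ⟨Matrix.isHermitian_conjTranspose_mul_mul B hA.1, fun x hx => ?_⟩
  have hBx : B *ᵥ x ≠ 0 := by
    have hinj := Matrix.mulVec_injective_iff_isUnit.mpr hB
    intro h
    exact hx (hinj (by simpa using h))
  simpa only [star_mulVec, dotProduct_mulVec, vecMul_vecMul] using hA.dotProduct_mulVec_pos hBx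

lemma posDef_of_posSemidef_isUnit {S : Matrix (Fin n) (Fin n) ℂ}
    (hS : S.PosSemidef) (h : IsUnit S) : S.PosDef := by
  refine Matrix.posDef_iff_dotProduct_mulVec.mpr ⟨hS.1, fun x hx => lt_of_le_of_ne (hS.dotProduct_mulVec_nonneg x) (fun h0 => ?_)⟩
  have : S *ᵥ x = 0 := (hS.dotProduct_mulVec_zero_iff x).mp h0.symm
  have hinj := Matrix.mulVec_injective_iff_isUnit.mpr h
  exact hx (hinj (by simpa using this))

lemma isUnit_sqrt {A : Matrix (Fin n) (Fin n) ℂ} (hA : A.PosSemidef) (h : IsUnit A) :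
    IsUnit hA.sqrt := by
  rw [Matrix.isUnit_iff_isUnit_det] at h ⊢
  have := hA.sqrt_mul_self
  have hdet : hA.sqrt.det * hA.sqrt.det = A.det := by rw [← Matrix.det_mul, this]
  exact isUnit_of_mul_isUnit_left (hdet ▸ h)

lemma posDef_sqrt {A : Matrix (Fin n) (Fin n) ℂ} (hA : A.PosDef) :
    hA.posSemidef.sqrt.PosDef :=
  posDef_of_posSemidef_isUnit hA.posSemidef.posSemidef_sqrt
    (isUnit_sqrt hA.posSemidef hA.isUnit)

lemma geomMean_spec {P Q : Matrix (Fin n) (Fin n) ℂ} (hP : P.PosDef) (hQ : Q.PosDef) :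
    (geomMean P Q).PosDef ∧ geomMean P Q * P⁻¹ * geomMean P Q = Q := by
  have hSpd : hP.posSemidef.sqrt.PosDef := posDef_sqrt hP
  set S := hP.posSemidef.sqrt with hSdef
  have hSu : IsUnit S := hSpd.isUnit
  haveI : Invertible S := hSu.invertible
  have hSH : Sᴴ = S := hSpd.1
  have hSiH : (S⁻¹)ᴴ = S⁻¹ := by rw [Matrix.conjTranspose_nonsing_inv, hSH]
  have hs : (S⁻¹ * Q * S⁻¹).PosDef := by
    have := posDef_conj hQ (Matrix.isUnit_nonsing_inv_iff.mpr hSu)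
    rwa [hSiH] at this
  have hG : geomMean P Q = S * hs.posSemidef.sqrt * S := by
    simp only [geomMean]
    rw [dif_pos ⟨hP, hQ⟩]
  set R := hs.posSemidef.sqrt with hRdef
  have hRpd : R.PosDef := posDef_sqrt hs
  have hRR : R * R = S⁻¹ * Q * S⁻¹ := hs.posSemidef.sqrt_mul_self
  have hSS : S * S = P := hP.posSemidef.sqrt_mul_self
  constructor
  · rw [hG]
    have := posDef_conj hRpd hSu
    rwa [hSH] at this
  · rw [hG]
    have hPinv : P⁻¹ = S⁻¹ * S⁻¹ := by rw [← hSS, Matrix.mul_inv_rev]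
    rw [hPinv]
    simp only [Matrix.mul_assoc, Matrix.mul_inv_cancel_left_of_invertible,
      Matrix.inv_mul_cancel_left_of_invertible]
    rw [← Matrix.mul_assoc R R S, hRR]
    simp only [Matrix.mul_assoc, Matrix.mul_inv_cancel_left_of_invertible,
      Matrix.inv_mul_cancel_left_of_invertible, Matrix.inv_mul_of_invertible, Matrix.mul_one]

lemma eigenvalues_le_one {S R : Matrix (Fin n) (Fin n) ℂ} (hS : S.IsHermitian) (hR : R.PosDef)
    (h : (R - S * R * S).PosSemidef) (i : Fin n) : hS.eigenvalues i ≤ 1 := by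
  set lam := hS.eigenvalues i with hlam
  set x := ⇑(hS.eigenvectorBasis i) with hxdef
  have hx0 : x ≠ 0 := by
    have h0 := hS.eigenvectorBasis.orthonormal.ne_zero i
    intro hc
    exact h0 (by ext j; exact congrFun hc j)
  have hSx : S *ᵥ x = lam • x := hS.mulVec_eigenvectorBasis i
  have hq : 0 < star x ⬝ᵥ (R *ᵥ x) := hR.dotProduct_mulVec_pos hx0
  set q := star x ⬝ᵥ (R *ᵥ x) with hqdef
  have hxS : star x ᵥ* S = lam • star x := by
    rw [← hS.eq, ← star_mulVec, hSx, star_smul, star_trivial]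
  have key : star x ⬝ᵥ ((S * R * S) *ᵥ x) = lam • lam • q := by
    rw [← Matrix.mulVec_mulVec, ← Matrix.mulVec_mulVec, hSx, Matrix.mulVec_smul,
      Matrix.mulVec_smul, dotProduct_smul,
      Matrix.dotProduct_mulVec, hxS, smul_dotProduct]
  have hineq := h.dotProduct_mulVec_nonneg x
  rw [Matrix.sub_mulVec, dotProduct_sub, key] at hineq
  have hql : lam • lam • q ≤ q := sub_nonneg.mp hineq
  rw [Complex.le_def] at hql
  have hqre : 0 < q.re := (Complex.lt_def.mp hq).1
  have hre : lam * (lam * q.re) ≤ q.re := by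
    simpa [Complex.smul_re] using hql.1
  have h2 : lam ^ 2 ≤ 1 := by nlinarith [hre, hqre]
  nlinarith [sq_nonneg (lam - 1)]

lemma one_sub_posSemidef {S R : Matrix (Fin n) (Fin n) ℂ} (hS : S.IsHermitian) (hR : R.PosDef)
    (h : (R - S * R * S).PosSemidef) : ((1 : Matrix (Fin n) (Fin n) ℂ) - S).PosSemidef := by
  have key : ∀ i, hS.eigenvalues i ≤ 1 := eigenvalues_le_one hS hR h
  set U := (hS.eigenvectorUnitary : Matrix (Fin n) (Fin n) ℂ) with hUdef
  have hU : U * star U = 1 := Matrix.mem_unitaryGroup_iff.mp hS.eigenvectorUnitary.2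
  have hspec : S = U * Matrix.diagonal (RCLike.ofReal ∘ hS.eigenvalues) * star U := hS.spectral_theorem
  have hdiag : (1 : Matrix (Fin n) (Fin n) ℂ) - S =
      U * Matrix.diagonal (fun i => 1 - (hS.eigenvalues i : ℂ)) * star U := by
    have : Matrix.diagonal (fun i => 1 - (hS.eigenvalues i : ℂ)) =
        1 - Matrix.diagonal (RCLike.ofReal ∘ hS.eigenvalues) := by
      rw [← Matrix.diagonal_one, Matrix.diagonal_sub]
      rfl
    rw [this, Matrix.mul_sub, Matrix.sub_mul, Matrix.mul_one, hU, ← hspec]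
  rw [hdiag, Matrix.star_eq_conjTranspose]
  refine Matrix.PosSemidef.mul_mul_conjTranspose_same ?_ U
  refine Matrix.posSemidef_diagonal_iff.mpr fun i => ?_
  rw [sub_nonneg]
  exact_mod_cast key i

lemma sub_geomMean_posSemidef {P Q T : Matrix (Fin n) (Fin n) ℂ} (hP : P.PosDef) (hQ : Q.PosDef)
    (hT : T.IsHermitian) (h : (Matrix.fromBlocks P T Tᴴ Q).PosSemidef) :
    (geomMean P Q - T).PosSemidef := by
  obtain ⟨hGpd, hric⟩ := geomMean_spec hP hQ
  haveI : Invertible P := hP.isUnit.invertible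
  have hschur : (Q - Tᴴ * P⁻¹ * T).PosSemidef := (Matrix.PosDef.fromBlocks₁₁ T Q hP).mp h
  have hWpd : hGpd.posSemidef.sqrt.PosDef := posDef_sqrt hGpd
  set W := hGpd.posSemidef.sqrt with hWdef
  haveI : Invertible W := hWpd.isUnit.invertible
  have hWH : Wᴴ = W := hWpd.1
  have hWiH : (W⁻¹)ᴴ = W⁻¹ := by rw [Matrix.conjTranspose_nonsing_inv, hWH]
  have hWW : W * W = geomMean P Q := hGpd.posSemidef.sqrt_mul_self
  have hRpd : (W * P⁻¹ * W).PosDef := by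
    have := posDef_conj hP.inv hWpd.isUnit
    rwa [hWH] at this
  have hSH : (W⁻¹ * T * W⁻¹).IsHermitian := by
    have := Matrix.isHermitian_conjTranspose_mul_mul W⁻¹ hT
    rwa [hWiH] at this
  have key : (W * P⁻¹ * W - (W⁻¹ * T * W⁻¹) * (W * P⁻¹ * W) * (W⁻¹ * T * W⁻¹)).PosSemidef := by
    have h2 : ((W⁻¹)ᴴ * (Q - Tᴴ * P⁻¹ * T) * W⁻¹).PosSemidef :=
      hschur.conjTranspose_mul_mul_same W⁻¹
    have heq : (W⁻¹)ᴴ * (Q - Tᴴ * P⁻¹ * T) * W⁻¹ =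
        W * P⁻¹ * W - (W⁻¹ * T * W⁻¹) * (W * P⁻¹ * W) * (W⁻¹ * T * W⁻¹) := by
      rw [hWiH, hT.eq]
      have hQeq : Q = (W * W) * P⁻¹ * (W * W) := by rw [hWW]; exact hric.symm
      rw [hQeq]
      simp only [Matrix.mul_sub, Matrix.sub_mul, Matrix.mul_assoc,
        Matrix.inv_mul_cancel_left_of_invertible, Matrix.mul_inv_cancel_left_of_invertible,
        Matrix.mul_inv_of_invertible, Matrix.inv_mul_of_invertible, Matrix.mul_one,
        Matrix.one_mul]
    rwa [heq] at h2
  have hone : ((1 : Matrix (Fin n) (Fin n) ℂ) - W⁻¹ * T * W⁻¹).PosSemidef :=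
    one_sub_posSemidef hSH hRpd key
  have h3 : (Wᴴ * ((1 : Matrix (Fin n) (Fin n) ℂ) - W⁻¹ * T * W⁻¹) * W).PosSemidef :=
    hone.conjTranspose_mul_mul_same W
  have heq2 : Wᴴ * ((1 : Matrix (Fin n) (Fin n) ℂ) - W⁻¹ * T * W⁻¹) * W =
      geomMean P Q - T := by
    rw [hWH, ← hWW]
    simp only [Matrix.mul_sub, Matrix.sub_mul, Matrix.mul_assoc,
      Matrix.inv_mul_cancel_left_of_invertible, Matrix.mul_inv_cancel_left_of_invertible,
      Matrix.mul_inv_of_invertible, Matrix.inv_mul_of_invertible, Matrix.mul_one, Matrix.one_mul]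
  rwa [heq2] at h3

end helpers

theorem stmt6 {n : ℕ} (A₁ A₂ B₁ B₂ X : Matrix (Fin n) (Fin n) ℂ)
    (hA₁ : A₁.PosDef) (hA₂ : A₂.PosDef) (hB₁ : B₁.PosDef) (hB₂ : B₂.PosDef)
    (h1 : (Matrix.fromBlocks A₁ X Xᴴ B₁).PosSemidef)
    (h2 : (Matrix.fromBlocks A₂ X Xᴴ B₂).PosSemidef) :
    (Matrix.fromBlocks (geomMean A₁ A₂) X Xᴴ (geomMean B₁ B₂)).PosSemidef := by
  obtain ⟨hGpd, hricA⟩ := geomMean_spec hA₁ hA₂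
  haveI : Invertible A₁ := hA₁.isUnit.invertible
  haveI : Invertible A₂ := hA₂.isUnit.invertible
  haveI : Invertible B₁ := hB₁.isUnit.invertible
  haveI : Invertible (geomMean A₁ A₂) := hGpd.isUnit.invertible
  have h2' : (B₂ - Xᴴ * A₂⁻¹ * X).PosSemidef := (Matrix.PosDef.fromBlocks₁₁ X B₂ hA₂).mp h2
  have h1' : (A₁ - X * B₁⁻¹ * Xᴴ).PosSemidef := (Matrix.PosDef.fromBlocks₂₂ A₁ X hB₁).mp h1
  have hGiH : ((geomMean A₁ A₂)⁻¹)ᴴ = (geomMean A₁ A₂)⁻¹ := by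
    rw [Matrix.conjTranspose_nonsing_inv, hGpd.1.eq]
  have hA2inv : A₂⁻¹ = (geomMean A₁ A₂)⁻¹ * A₁ * (geomMean A₁ A₂)⁻¹ := by
    conv_lhs => rw [← hricA]
    rw [Matrix.mul_inv_rev, Matrix.mul_inv_rev, Matrix.inv_inv_of_invertible, Matrix.mul_assoc]
  have hYH : (Xᴴ * (geomMean A₁ A₂)⁻¹ * X).IsHermitian :=
    Matrix.isHermitian_conjTranspose_mul_mul X hGpd.inv.1
  have hkey : (B₂ - (Xᴴ * (geomMean A₁ A₂)⁻¹ * X)ᴴ * B₁⁻¹ * (Xᴴ * (geomMean A₁ A₂)⁻¹ * X)).PosSemidef := by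
    rw [hYH.eq]
    have hsum : B₂ - (Xᴴ * (geomMean A₁ A₂)⁻¹ * X) * B₁⁻¹ * (Xᴴ * (geomMean A₁ A₂)⁻¹ * X)
        = (B₂ - Xᴴ * A₂⁻¹ * X)
          + ((geomMean A₁ A₂)⁻¹ * X)ᴴ * (A₁ - X * B₁⁻¹ * Xᴴ) * ((geomMean A₁ A₂)⁻¹ * X) := by
      rw [hA2inv, Matrix.conjTranspose_mul, hGiH]
      simp only [Matrix.mul_sub, Matrix.sub_mul, Matrix.mul_assoc]
      abel
    rw [hsum]
    exact h2'.add (h1'.conjTranspose_mul_mul_same ((geomMean A₁ A₂)⁻¹ * X))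
  have hblock : (Matrix.fromBlocks B₁ (Xᴴ * (geomMean A₁ A₂)⁻¹ * X)
      (Xᴴ * (geomMean A₁ A₂)⁻¹ * X)ᴴ B₂).PosSemidef :=
    (Matrix.PosDef.fromBlocks₁₁ _ B₂ hB₁).mpr hkey
  have hfin : (geomMean B₁ B₂ - Xᴴ * (geomMean A₁ A₂)⁻¹ * X).PosSemidef :=
    sub_geomMean_posSemidef hB₁ hB₂ hYH hblock
  exact (Matrix.PosDef.fromBlocks₁₁ X (geomMean B₁ B₂) hGpd).mpr hfin
end

section
/- Let L be a Lieb function on n×n complex matrices, i.e. L maps n×n complex matrices to the reals and satisfies: (i) 0 ≤ L(M) ≤ L(N) whenever 0 ≤ M ≤ N in the Loewner order; and (ii) |L(M*N)|² ≤ L(M*M)·L(N*N) for all M, N. If X, Y, Z are n×n complex matrices with X, Y positive semidefinite and the block matrix [[X, Z*], [Z, Y]] positive semidefinite, then |L(Z)|² ≤ L(X)·L(Y). -/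
/-!
Write `X ^ (1/2)` for the square root of `X` and `X ^ (-1/2)` for the pseudo-inverse of that
square root (zero on `ker X`). Positivity of the block matrix forces `Z` to vanish on `ker X`,
so `Z = Mᴴ N` with `N = X ^ (1/2)` and `M = X ^ (-1/2) Zᴴ`. Then `Nᴴ N = X`, and
`Mᴴ M = Z X⁺ Zᴴ ≤ Y` is the generalised Schur complement inequality. Property (ii) applied
to `M, N`, followed by monotonicity (i), gives `|L Z|² ≤ L (Mᴴ M) L X ≤ L Y L X`.
-/

open Matrix ComplexOrder

namespace Matrix

variable {𝕜 l m n : Type*} [RCLike 𝕜] [Fintype l] [Fintype m] [Fintype n]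

theorem PosSemidef.mulVec_eq_zero_of_fromBlocks {A : Matrix m m 𝕜} {C : Matrix n m 𝕜}
    {D : Matrix n n 𝕜} (h : (fromBlocks A Cᴴ C D).PosSemidef) {u : m → 𝕜}
    (hu : A *ᵥ u = 0) : C *ᵥ u = 0 := by
  have hmul : fromBlocks A Cᴴ C D *ᵥ Sum.elim u 0 = Sum.elim (0 : m → 𝕜) (C *ᵥ u) := by
    simp [fromBlocks_mulVec, hu]
  have hquad : star (Sum.elim u 0) ⬝ᵥ (fromBlocks A Cᴴ C D *ᵥ Sum.elim u 0) = 0 := by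
    simp [hmul, dotProduct, Fintype.sum_sum_type]
  have hzero := (h.dotProduct_mulVec_zero_iff _).mp hquad
  rw [hmul] at hzero
  exact funext fun i => congr_fun hzero (Sum.inr i)

theorem PosSemidef.mul_eq_zero_of_fromBlocks {A : Matrix m m 𝕜} {C : Matrix n m 𝕜}
    {D : Matrix n n 𝕜} (h : (fromBlocks A Cᴴ C D).PosSemidef) {E : Matrix m l 𝕜}
    (hE : A * E = 0) : C * E = 0 :=
  ext_iff_mulVec.mpr fun v => by
    rw [← mulVec_mulVec, zero_mulVec]
    exact h.mulVec_eq_zero_of_fromBlocks (by rw [mulVec_mulVec, hE, zero_mulVec])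

/-- The Schur complement of `A`, with `Q` in the role of a generalised inverse of `A`. -/
theorem PosSemidef.sub_mul_mul_conjTranspose_of_fromBlocks {A : Matrix m m 𝕜}
    {C : Matrix n m 𝕜} {D : Matrix n n 𝕜} (h : (fromBlocks A Cᴴ C D).PosSemidef)
    {Q : Matrix m m 𝕜} (hQ : Qᴴ = Q) (hQAQ : Q * A * Q = Q) :
    (D - C * Q * Cᴴ).PosSemidef := by
  classical
  have hCQ : (C * Q)ᴴ = Q * Cᴴ := by rw [conjTranspose_mul, hQ]
  have hCQAQC : C * Q * A * Q * Cᴴ = C * Q * Cᴴ := by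
    rw [Matrix.mul_assoc C Q A, Matrix.mul_assoc C (Q * A) Q, hQAQ]
  convert h.mul_mul_conjTranspose_same (fromCols (-(C * Q)) 1) using 1
  rw [fromCols_mul_fromBlocks, conjTranspose_fromCols_eq_fromRows_conjTranspose,
    fromCols_mul_fromRows]
  simp only [conjTranspose_neg, conjTranspose_one, hCQ, Matrix.neg_mul, Matrix.mul_neg,
    Matrix.one_mul, Matrix.mul_one, Matrix.add_mul, hCQAQC, ← Matrix.mul_assoc]
  abel

theorem IsHermitian.cfc_mul_cfc [DecidableEq m] {A : Matrix m m 𝕜} (hA : A.IsHermitian)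
    (f g : ℝ → ℝ) : cfc f A * cfc g A = cfc (fun t => f t * g t) A :=
  have hfin : (spectrum ℝ A).Finite :=
    hA.spectrum_real_eq_range_eigenvalues ▸ Set.finite_range _
  (cfc_mul f g A (hfin.continuousOn f) (hfin.continuousOn g)).symm

theorem PosSemidef.nonneg_of_mem_spectrum [DecidableEq m] {A : Matrix m m 𝕜}
    (hA : A.PosSemidef) {t : ℝ} (ht : t ∈ spectrum ℝ A) : 0 ≤ t := by
  obtain ⟨i, rfl⟩ := hA.isHermitian.spectrum_real_eq_range_eigenvalues ▸ ht
  exact hA.eigenvalues_nonneg i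

/-- `N = cfc √ A` and `R = cfc (√·)⁻¹ A`; since `(√0)⁻¹ = 0`, `R` is the pseudo-inverse
of `N`. -/
theorem PosSemidef.exists_sqrt_pinvSqrt [DecidableEq m] {A : Matrix m m 𝕜} (hA : A.PosSemidef) :
    ∃ N R : Matrix m m 𝕜, N.IsHermitian ∧ R.IsHermitian ∧
      N * N = A ∧ A * (R * N) = A ∧ R * R * A * (R * R) = R * R := by
  have hid : cfc (fun t : ℝ => t) A = A := cfc_id' ℝ A hA.isHermitian.isSelfAdjoint
  have hmul := hA.isHermitian.cfc_mul_cfc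
  have hmul_left (g : ℝ → ℝ) : A * cfc g A = cfc (fun t => t * g t) A := by
    simpa only [hid] using hmul (fun t => t) g
  have hmul_right (f : ℝ → ℝ) : cfc f A * A = cfc (fun t => f t * t) A := by
    simpa only [hid] using hmul f (fun t => t)
  have hspec {f g : ℝ → ℝ} (hfg : ∀ t, 0 ≤ t → f t = g t) : cfc f A = cfc g A :=
    cfc_congr fun t ht => hfg t (hA.nonneg_of_mem_spectrum ht)
  refine ⟨cfc Real.sqrt A, cfc (fun t => (Real.sqrt t)⁻¹) A,
    (cfc_predicate _ A : IsSelfAdjoint _).isHermitian,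
    (cfc_predicate _ A : IsSelfAdjoint _).isHermitian, ?_, ?_, ?_⟩
  · rw [hmul]
    exact (hspec fun t ht => Real.mul_self_sqrt ht).trans hid
  · rw [hmul, hmul_left]
    refine (hspec fun t ht => ?_).trans hid
    rcases ht.eq_or_lt with rfl | ht
    · simp
    · simp [(Real.sqrt_pos.mpr ht).ne']
  · rw [hmul, hmul_right, hmul]
    refine hspec fun t ht => ?_
    rcases ht.eq_or_lt with rfl | ht
    · simp
    · have hsqrt := (Real.sqrt_pos.mpr ht).ne'
      field_simp
      rw [Real.sq_sqrt ht.le]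

theorem PosSemidef.exists_conjTranspose_mul_eq_of_fromBlocks {A : Matrix m m 𝕜}
    {C : Matrix n m 𝕜} {D : Matrix n n 𝕜} (h : (fromBlocks A Cᴴ C D).PosSemidef) :
    ∃ (M : Matrix m n 𝕜) (N : Matrix m m 𝕜),
      Mᴴ * N = C ∧ Nᴴ * N = A ∧ (D - Mᴴ * M).PosSemidef := by
  classical
  have hA : A.PosSemidef := h.submatrix Sum.inl
  obtain ⟨N, R, hN, hR, hNN, hARN, hRRARR⟩ := hA.exists_sqrt_pinvSqrt
  have hRC : (R * Cᴴ)ᴴ = C * R := by rw [conjTranspose_mul, conjTranspose_conjTranspose, hR.eq]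
  refine ⟨R * Cᴴ, N, ?_, by rw [hN.eq, hNN], ?_⟩
  · have hCRN : C * (1 - R * N) = 0 :=
      h.mul_eq_zero_of_fromBlocks (by rw [Matrix.mul_sub, hARN, Matrix.mul_one, sub_self])
    rw [Matrix.mul_sub, Matrix.mul_one, sub_eq_zero] at hCRN
    rw [hRC, Matrix.mul_assoc, ← hCRN]
  · have hSchur := h.sub_mul_mul_conjTranspose_of_fromBlocks
      (by rw [conjTranspose_mul, hR.eq]) hRRARR
    rw [hRC]
    simpa only [Matrix.mul_assoc] using hSchur

end Matrix

open scoped Classical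

theorem stmt13_general {n : ℕ} (L : Matrix (Fin n) (Fin n) ℂ → ℝ)
    (h1 : ∀ M N : Matrix (Fin n) (Fin n) ℂ,
      M.PosSemidef → (N - M).PosSemidef → 0 ≤ L M ∧ L M ≤ L N)
    (h2 : ∀ M N : Matrix (Fin n) (Fin n) ℂ,
      |L (Mᴴ * N)| ^ 2 ≤ L (Mᴴ * M) * L (Nᴴ * N))
    (X Y Z : Matrix (Fin n) (Fin n) ℂ)
    (hb : (Matrix.fromBlocks X Zᴴ Z Y).PosSemidef) :
    |L Z| ^ 2 ≤ L X * L Y := by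
  obtain ⟨M, N, rfl, rfl, hMY⟩ := hb.exists_conjTranspose_mul_eq_of_fromBlocks
  have hLN : 0 ≤ L (Nᴴ * N) :=
    (h1 _ _ (posSemidef_conjTranspose_mul_self N) (sub_self (Nᴴ * N) ▸ PosSemidef.zero)).1
  have hLM : L (Mᴴ * M) ≤ L Y := (h1 _ _ (posSemidef_conjTranspose_mul_self M) hMY).2
  calc |L (Mᴴ * N)| ^ 2 ≤ L (Mᴴ * M) * L (Nᴴ * N) := h2 M N
    _ ≤ L Y * L (Nᴴ * N) := mul_le_mul_of_nonneg_right hLM hLN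
    _ = L (Nᴴ * N) * L Y := mul_comm _ _

theorem stmt13 {n : ℕ} (L : Matrix (Fin n) (Fin n) ℂ → ℝ)
    (h1 : ∀ M N : Matrix (Fin n) (Fin n) ℂ,
      M.PosSemidef → (N - M).PosSemidef → 0 ≤ L M ∧ L M ≤ L N)
    (h2 : ∀ M N : Matrix (Fin n) (Fin n) ℂ,
      |L (Mᴴ * N)| ^ 2 ≤ L (Mᴴ * M) * L (Nᴴ * N))
    (X Y Z : Matrix (Fin n) (Fin n) ℂ)
    (hX : X.PosSemidef) (hY : Y.PosSemidef)
    (hb : (Matrix.fromBlocks X Zᴴ Z Y).PosSemidef) :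
    |L Z| ^ 2 ≤ L X * L Y :=
  stmt13_general L h1 h2 X Y Z hb
end
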